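/- arXiv:1602.04887 — 2 statements merged into one kernel-verified Lean document; each statement's English description precedes it below -/
import Mathlib

section
/- For the Avalanche distribution with parameters N and p ∈ (0, 1/N), the mean satisfies E(X_{N,p}) = Σ_{i=1}^{N} (N!/(N-i)!) * p^i. -/
/-- Density of the Avalanche distribution with parameters `N` and `p`,
evaluated at `b`. -/
noncomputable def avalancheP (N : ℕ) (p : ℝ) (b : ℕ) : ℝ :=
  (N.choose b) * p ^ b * (1 - (b + 1) * p) ^ (N - b) * ((b : ℝ) + 1) ^ ((b : ℤ) - 1)

/-!
After `b * C(N, b) = N * C(N - 1, b - 1)`, the mean becomes `N p` times the Abel-type sum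
`∑ₖ C(n, k) (x + k z)^k (s - x - k z)^(n - k)` with `n = N - 1`, `s = 1`, `z = p`, `x = 2 p`.
This sum does not depend on `x` and equals `∑ᵢ n! / (n - i)! s^(n - i) z^i`. Pascal's rule
expresses the sum for `n + 1` through the sum for `n` and the difference `W(x + z) - W(x)` of the
companion sum `W` with exponent `k + 1` in place of `k`; that difference obeys a recurrence of the
same kind, so both closed forms follow by a simultaneous induction on `n`.
-/

open Finset

section Binomial

variable {R : Type*} [CommSemiring R]

theorem sum_range_succ_choose_mul (f : ℕ → R) (n : ℕ) :
    ∑ k ∈ range (n + 2), ((n + 1).choose k : R) * f k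
      = ∑ k ∈ range (n + 1), (n.choose k : R) * (f k + f (k + 1)) := by
  have hshift : ∑ k ∈ range (n + 1), (n.choose k : R) * f k
      = f 0 + ∑ k ∈ range (n + 1), (n.choose (k + 1) : R) * f (k + 1) := by
    rw [sum_range_succ', sum_range_succ (fun k => (n.choose (k + 1) : R) * f (k + 1)),
      Nat.choose_succ_self]
    simp [add_comm]
  rw [sum_range_succ']
  simp only [Nat.choose_succ_succ', Nat.cast_add, add_mul, mul_add, sum_add_distrib,
    Nat.choose_zero_right, Nat.cast_one, one_mul, hshift]
  ring

theorem sum_range_succ_mul_choose_mul (f : ℕ → R) (n : ℕ) :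
    ∑ k ∈ range (n + 2), ((k : R) * (n + 1).choose k) * f k
      = (n + 1) * ∑ k ∈ range (n + 1), (n.choose k : R) * f (k + 1) := by
  rw [sum_range_succ', mul_sum]
  simp only [Nat.cast_zero, zero_mul, add_zero]
  refine sum_congr rfl fun k _ => ?_
  have h := congrArg (Nat.cast (R := R)) (Nat.add_one_mul_choose_eq n k)
  push_cast at h ⊢
  rw [← mul_assoc, h, mul_comm ((k : R) + 1)]

end Binomial

section Abel

variable {R : Type*} [CommRing R] (s z : R)

def abelSum (n : ℕ) (x : R) : R :=
  ∑ k ∈ range (n + 1), (n.choose k : R) * (x + k * z) ^ k * (s - (x + k * z)) ^ (n - k)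

def abelSum' (n : ℕ) (x : R) : R :=
  ∑ k ∈ range (n + 1), (n.choose k : R) * (x + k * z) ^ (k + 1) * (s - (x + k * z)) ^ (n - k)

def descFactorialSum (n : ℕ) : R :=
  ∑ i ∈ range (n + 1), (n.descFactorial i : R) * s ^ (n - i) * z ^ i

theorem abelSum_succ (n : ℕ) (x : R) :
    abelSum s z (n + 1) x = s * abelSum s z n x - abelSum' s z n x + abelSum' s z n (x + z) := by
  simp only [abelSum, abelSum', mul_assoc]
  rw [sum_range_succ_choose_mul, mul_sum, ← sum_sub_distrib, ← sum_add_distrib]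
  refine sum_congr rfl fun k hk => ?_
  have hnk : n + 1 - k = n - k + 1 := by have := mem_range.mp hk; omega
  rw [hnk, Nat.add_sub_add_right, Nat.cast_succ, show x + (k + 1) * z = x + z + k * z by ring]
  ring

theorem abelSum'_succ (n : ℕ) (x : R) :
    abelSum' s z (n + 1) x = x * abelSum s z (n + 1) x + (n + 1) * z * abelSum' s z n (x + z) := by
  have hsplit : abelSum' s z (n + 1) x = x * abelSum s z (n + 1) x + z *
      ∑ k ∈ range (n + 2), ((k : R) * (n + 1).choose k) *
        ((x + k * z) ^ k * (s - (x + k * z)) ^ (n + 1 - k)) := by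
    simp only [abelSum', abelSum, mul_sum, ← sum_add_distrib]
    refine sum_congr rfl fun k _ => ?_
    ring
  rw [hsplit, sum_range_succ_mul_choose_mul, abelSum', mul_sum, mul_sum, mul_sum]
  congr 1
  refine sum_congr rfl fun k _ => ?_
  rw [Nat.add_sub_add_right, Nat.cast_succ, show x + (k + 1) * z = x + z + k * z by ring]
  ring

theorem descFactorialSum_succ (n : ℕ) :
    descFactorialSum s z (n + 1) = s ^ (n + 1) + (n + 1) * z * descFactorialSum s z n := by
  rw [descFactorialSum, sum_range_succ', descFactorialSum, mul_sum, add_comm]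
  simp only [Nat.succ_descFactorial_succ, Nat.add_sub_add_right, Nat.descFactorial_zero,
    Nat.cast_mul, Nat.cast_succ, Nat.cast_zero, pow_zero, zero_add, one_mul, mul_one, Nat.sub_zero]
  congr 1
  refine sum_congr rfl fun i _ => ?_
  ring

theorem abelSum_eq_and_abelSum'_sub (n : ℕ) : ∀ x : R,
    abelSum s z n x = descFactorialSum s z n ∧
      abelSum' s z n (x + z) - abelSum' s z n x
        = descFactorialSum s z (n + 1) - s * descFactorialSum s z n := by
  induction n with
  | zero =>
    intro x
    simp [abelSum, abelSum', descFactorialSum, sum_range_succ]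
  | succ n ih =>
    have hS : ∀ x, abelSum s z (n + 1) x = descFactorialSum s z (n + 1) := fun x => by
      rw [abelSum_succ, (ih x).1]
      linear_combination (ih x).2
    refine fun x => ⟨hS x, ?_⟩
    have hF := descFactorialSum_succ s z (n + 1)
    push_cast at hF
    rw [abelSum'_succ, abelSum'_succ, hS, hS]
    linear_combination ((n : R) + 1) * z * (ih (x + z)).2 - hF + s * descFactorialSum_succ s z n

theorem abelSum_eq_descFactorialSum (n : ℕ) (x : R) :
    abelSum s z n x = descFactorialSum s z n :=
  (abelSum_eq_and_abelSum'_sub s z n x).1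

end Abel

theorem sum_mul_avalancheP (n : ℕ) (p : ℝ) :
    ∑ b ∈ range (n + 2), (b : ℝ) * avalancheP (n + 1) p b
      = (n + 1) * p * abelSum 1 p n (2 * p) := by
  have hterm : ∀ b : ℕ, (b : ℝ) * avalancheP (n + 1) p b = ((b : ℝ) * (n + 1).choose b) *
      (p ^ b * (1 - (b + 1) * p) ^ (n + 1 - b) * ((b : ℝ) + 1) ^ ((b : ℤ) - 1)) := fun b => by
    rw [avalancheP]
    ring
  rw [sum_congr rfl fun b _ => hterm b, sum_range_succ_mul_choose_mul, abelSum, mul_assoc]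
  congr 1
  rw [mul_sum]
  refine sum_congr rfl fun k _ => ?_
  have hzpow : (((k + 1 : ℕ) : ℝ) + 1) ^ (((k + 1 : ℕ) : ℤ) - 1) = ((k : ℝ) + 2) ^ k := by
    push_cast
    rw [add_sub_cancel_right, zpow_natCast]
    ring
  rw [hzpow, Nat.add_sub_add_right, show 2 * p + k * p = (k + 2) * p by ring, mul_pow]
  push_cast
  ring

theorem sum_Icc_factorial_div_mul_pow (n : ℕ) (p : ℝ) :
    ∑ i ∈ Icc 1 (n + 1), ((n + 1).factorial : ℝ) / (n + 1 - i).factorial * p ^ i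
      = (n + 1) * p * descFactorialSum 1 p n := by
  rw [← Ico_add_one_right_eq_Icc, sum_Ico_eq_sum_range, descFactorialSum, mul_sum,
    Nat.add_sub_cancel]
  refine sum_congr rfl fun i hi => ?_
  have hi : i ≤ n := Nat.lt_succ_iff.mp (mem_range.mp hi)
  have hfac := congrArg (Nat.cast (R := ℝ)) (Nat.factorial_mul_descFactorial hi)
  push_cast at hfac
  rw [show n + 1 - (1 + i) = n - i by omega, Nat.factorial_succ, Nat.cast_mul, ← hfac, one_pow,
    pow_add]
  field_simp
  push_cast
  ring

theorem avalanche_mean_general (N : ℕ) (p : ℝ) :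
    ∑ b ∈ Finset.range (N + 1), (b : ℝ) * avalancheP N p b
      = ∑ i ∈ Finset.Icc 1 N, ((N.factorial : ℝ) / (N - i).factorial) * p ^ i := by
  rcases N with _ | n
  · simp
  rw [sum_mul_avalancheP, abelSum_eq_descFactorialSum, sum_Icc_factorial_div_mul_pow]

theorem avalanche_mean (N : ℕ) (hN : 0 < N) (p : ℝ) (hp : 0 < p) (hp' : p < 1 / N) :
    ∑ b ∈ Finset.range (N + 1), (b : ℝ) * avalancheP N p b
      = ∑ i ∈ Finset.Icc 1 N, ((N.factorial : ℝ) / (N - i).factorial) * p ^ i :=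
  avalanche_mean_general N p
end

section
/- The second moment of the Abelian distribution with parameters N and p satisfies E(Z_{N,p}^2) = (C_{N,p}/p) * [1/(1-Np) - 1 - Σ_{i=1}^{N-1} ((N-1)!/(N-1-i)!) * p^i]. -/
/-!
Multiplying the second moment by `p` and reflecting `b ↦ N - b` turns it into the Abel-type sum
`∑ₖ C(n,k) (1 - uₖ)^(n+1-k) uₖ^(k-1)` with `n = N - 1` and `uₖ = 1 - N p + k p`. Splitting off one
factor `1 - uₖ` leaves Abel's identity `∑ₖ C(n,k) y uₖ^(k-1) (1 - uₖ)^(n-k) = 1` (with `y = u₀`),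
which contributes `1 / (1 - N p)`, minus `∑ₖ C(n,k) uₖ^k (1 - uₖ)^(n-k) = ∑ₘ n!/(n-m)! p^m`.
Both Abel sums are evaluated by expanding `(a - uₖ)^(n-k)` binomially and exchanging the two sums:
the inner sums become `m`-th forward differences of polynomials in `k` of degree at most `m`,
which only see the coefficient of `k^m`.
-/

/-- Density of the Abelian distribution with parameters `N` and `p`,
evaluated at `b`. -/
noncomputable def abelianP (N : ℕ) (p : ℝ) (b : ℕ) : ℝ :=
  ((1 - N * p) / (1 - ((N : ℝ) - 1) * p)) * ((N - 1).choose (b - 1)) *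
    p ^ (b - 1) * (1 - b * p) ^ ((N : ℤ) - b - 1) * (b : ℝ) ^ ((b : ℤ) - 2)

open Finset
open scoped Nat

section ForwardDifference

open Polynomial

variable {R : Type*} [CommRing R]

theorem Polynomial.sum_neg_one_pow_mul_choose_mul_eval {P : R[X]} {m : ℕ}
    (hP : P.natDegree ≤ m) :
    ∑ k ∈ range (m + 1), (-1) ^ (m - k) * (m.choose k : R) * P.eval (k : R)
      = m ! * P.coeff m := by
  have hshift := fwdDiff_iter_eq_sum_shift (1 : R) P.eval m 0
  simp only [zsmul_eq_mul, nsmul_eq_mul, mul_one, zero_add] at hshift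
  push_cast at hshift
  rw [← hshift]
  rcases hP.lt_or_eq with hlt | rfl
  · simp [fwdDiff_iter_eq_zero_of_degree_lt hlt, coeff_eq_zero_of_natDegree_lt hlt]
  · simp [fwdDiff_iter_degree_eq_factorial, mul_comm]

theorem sum_neg_one_pow_mul_choose_mul_add_mul_pow {d m : ℕ} (hd : d ≤ m) (y z : R) :
    ∑ k ∈ range (m + 1), (-1) ^ (m - k) * (m.choose k : R) * (y + k * z) ^ d
      = m ! * ((C z * X + C y) ^ d).coeff m := by
  have hdeg : ((C z * X + C y) ^ d).natDegree ≤ m :=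
    (natDegree_pow_le_of_le d natDegree_linear_le).trans (by simpa using hd)
  rw [← sum_neg_one_pow_mul_choose_mul_eval hdeg]
  simp only [eval_pow, eval_add, eval_mul, eval_C, eval_X, add_comm y, mul_comm z]

theorem sum_neg_one_pow_mul_choose_mul_add_mul_pow_of_lt {d m : ℕ} (hd : d < m) (y z : R) :
    ∑ k ∈ range (m + 1), (-1) ^ (m - k) * (m.choose k : R) * (y + k * z) ^ d = 0 := by
  rw [sum_neg_one_pow_mul_choose_mul_add_mul_pow hd.le, coeff_eq_zero_of_natDegree_lt, mul_zero]
  exact (natDegree_pow_le_of_le d natDegree_linear_le).trans_lt (by simpa using hd)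

theorem sum_neg_one_pow_mul_choose_mul_add_mul_pow_self (m : ℕ) (y z : R) :
    ∑ k ∈ range (m + 1), (-1) ^ (m - k) * (m.choose k : R) * (y + k * z) ^ m = m ! * z ^ m := by
  have hcoeff := coeff_pow_of_natDegree_le (m := m) (natDegree_linear_le (a := z) (b := y))
  rw [mul_one] at hcoeff
  rw [sum_neg_one_pow_mul_choose_mul_add_mul_pow le_rfl, hcoeff]
  simp

end ForwardDifference

theorem self_mul_zpow_natCast_sub_one {G₀ : Type*} [GroupWithZero G₀] {x : G₀} {k : ℕ}
    (hx : k = 0 → x ≠ 0) : x * x ^ ((k : ℤ) - 1) = x ^ k := by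
  rcases k with _ | k
  · simp [hx rfl]
  · rw [Nat.cast_succ, add_sub_cancel_right, zpow_natCast, pow_succ']

section AbelSums

variable {R : Type*} [CommRing R]

theorem choose_mul_sub_pow_eq_sum {n k : ℕ} (hk : k ≤ n) (a u : R) :
    (n.choose k : R) * (a - u) ^ (n - k)
      = ∑ m ∈ range (n + 1),
          (n.choose m * m.choose k : R) * (-1) ^ (m - k) * a ^ (n - m) * u ^ (m - k) := by
  rw [← sum_range_add_sum_Ico _ (by omega : k ≤ n + 1),
    sum_eq_zero fun m hm => by simp [Nat.choose_eq_zero_of_lt (mem_range.mp hm)], zero_add,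
    sum_Ico_eq_sum_range, sub_eq_neg_add, add_pow, mul_sum, show n + 1 - k = n - k + 1 by omega]
  refine sum_congr rfl fun i _ => ?_
  have hchoose : n.choose (k + i) * (k + i).choose k = n.choose k * (n - k).choose i := by
    simpa using Nat.choose_mul (n := n) (Nat.le_add_right k i)
  rw [show n - (k + i) = n - k - i by omega, add_tsub_cancel_left, ← Nat.cast_mul, hchoose,
    neg_pow]
  push_cast
  ring

theorem sum_choose_mul_sub_pow (n : ℕ) (a : R) (u v : ℕ → R) :
    ∑ k ∈ range (n + 1), (n.choose k : R) * v k * (a - u k) ^ (n - k)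
      = ∑ m ∈ range (n + 1), (n.choose m : R) * a ^ (n - m) *
          ∑ k ∈ range (m + 1), (-1) ^ (m - k) * (m.choose k : R) * (v k * u k ^ (m - k)) := by
  calc ∑ k ∈ range (n + 1), (n.choose k : R) * v k * (a - u k) ^ (n - k)
      = ∑ k ∈ range (n + 1), ∑ m ∈ range (n + 1), (n.choose m : R) * a ^ (n - m) *
          ((-1) ^ (m - k) * (m.choose k : R) * (v k * u k ^ (m - k))) := by
        refine sum_congr rfl fun k hk => ?_
        rw [mul_right_comm, choose_mul_sub_pow_eq_sum (Nat.lt_succ_iff.mp (mem_range.mp hk)),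
          sum_mul]
        exact sum_congr rfl fun m _ => by ring
    _ = _ := by
        rw [sum_comm]
        refine sum_congr rfl fun m hm => ?_
        rw [← mul_sum]
        refine congrArg _ (sum_subset (range_subset_range.mpr (by simpa using hm))
          fun k _ hk => ?_).symm
        simp [Nat.choose_eq_zero_of_lt (by simpa using hk : m < k)]

theorem sum_choose_mul_add_mul_pow_mul_sub_pow (n : ℕ) (a y z : R) :
    ∑ k ∈ range (n + 1), (n.choose k : R) * (y + k * z) ^ k * (a - (y + k * z)) ^ (n - k)
      = ∑ m ∈ range (n + 1), (n.descFactorial m : R) * z ^ m * a ^ (n - m) := by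
  rw [sum_choose_mul_sub_pow]
  refine sum_congr rfl fun m _ => ?_
  have hpow : ∀ k ∈ range (m + 1), (y + k * z) ^ k * (y + k * z) ^ (m - k) = (y + k * z) ^ m :=
    fun k hk => by rw [← pow_add, Nat.add_sub_cancel' (Nat.lt_succ_iff.mp (mem_range.mp hk))]
  rw [sum_congr rfl fun k hk => by rw [hpow k hk], sum_neg_one_pow_mul_choose_mul_add_mul_pow_self,
    Nat.descFactorial_eq_factorial_mul_choose]
  push_cast
  ring

variable {K : Type*} [Field K]

theorem abel_identity (n : ℕ) (a : K) {y : K} (hy : y ≠ 0) (z : K) :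
    ∑ k ∈ range (n + 1),
        (n.choose k : K) * (y * (y + k * z) ^ ((k : ℤ) - 1)) * (a - (y + k * z)) ^ (n - k)
      = a ^ n := by
  rw [sum_choose_mul_sub_pow, sum_range_succ', sum_eq_zero fun m _ => ?_]
  · simp [hy]
  -- the inner sum is `y` times an `(m + 1)`-th difference of a polynomial of degree `m`
  have hpow : ∀ k ∈ range (m + 1 + 1),
      y * (y + k * z) ^ ((k : ℤ) - 1) * (y + k * z) ^ (m + 1 - k) = y * (y + k * z) ^ m := by
    intro k hk
    rcases k with _ | k
    · simp [hy, pow_succ']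
    · rw [show ((k + 1 : ℕ) : ℤ) - 1 = k by push_cast; ring, zpow_natCast, mul_assoc, ← pow_add,
        Nat.add_sub_add_right, Nat.add_sub_cancel' (by have := mem_range.mp hk; omega)]
  rw [sum_congr rfl fun k hk => by rw [hpow k hk]]
  simp_rw [← mul_assoc, mul_right_comm _ y, ← sum_mul,
    sum_neg_one_pow_mul_choose_mul_add_mul_pow_of_lt m.lt_succ_self]
  simp

theorem sum_choose_mul_sub_pow_succ_mul_zpow (n : ℕ) (a : K) {y : K} (hy : y ≠ 0) (z : K) :
    ∑ k ∈ range (n + 1),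
        (n.choose k : K) * (a - (y + k * z)) ^ (n + 1 - k) * (y + k * z) ^ ((k : ℤ) - 1)
      = a ^ (n + 1) / y - ∑ m ∈ range (n + 1), (n.descFactorial m : K) * z ^ m * a ^ (n - m) := by
  have hterm : ∀ k ∈ range (n + 1),
      (n.choose k : K) * (a - (y + k * z)) ^ (n + 1 - k) * (y + k * z) ^ ((k : ℤ) - 1)
        = a / y * ((n.choose k : K) * (y * (y + k * z) ^ ((k : ℤ) - 1))
              * (a - (y + k * z)) ^ (n - k))
          - (n.choose k : K) * (y + k * z) ^ k * (a - (y + k * z)) ^ (n - k) := by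
    intro k hk
    have hu : (y + k * z) * (y + k * z) ^ ((k : ℤ) - 1) = (y + k * z) ^ k :=
      self_mul_zpow_natCast_sub_one fun hk0 => by simpa [hk0] using hy
    rw [show n + 1 - k = n - k + 1 by have := mem_range.mp hk; omega, ← hu]
    field_simp
    ring
  rw [sum_congr rfl hterm, sum_sub_distrib, ← mul_sum, abel_identity n a hy,
    sum_choose_mul_add_mul_pow_mul_sub_pow, pow_succ']
  ring

end AbelSums

theorem sum_Icc_one_succ_eq_sum_range_reflect {M : Type*} [AddCommMonoid M] (f : ℕ → M)
    (n : ℕ) : ∑ b ∈ Icc 1 (n + 1), f b = ∑ k ∈ range (n + 1), f (n + 1 - k) := by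
  rw [range_eq_Ico, sum_Ico_reflect f 0 (Nat.le_succ (n + 1)), ← Ico_add_one_right_eq_Icc]
  simp

theorem sum_range_descFactorial_mul_pow {K : Type*} [Field K] [CharZero K] (n : ℕ) (p : K) :
    ∑ m ∈ range (n + 1), (n.descFactorial m : K) * p ^ m
      = 1 + ∑ i ∈ Icc 1 n, ((n ! : K) / (n - i)!) * p ^ i := by
  rw [range_eq_Ico, sum_eq_sum_Ico_succ_bot n.succ_pos, ← Ico_add_one_right_eq_Icc]
  simp only [Nat.descFactorial_zero, Nat.cast_one, pow_zero, mul_one]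
  refine congrArg _ (sum_congr rfl fun i hi => ?_)
  rw [Nat.descFactorial_eq_div (Nat.lt_succ_iff.mp (mem_Ico.mp hi).2),
    Nat.cast_div (Nat.factorial_dvd_factorial (Nat.sub_le n i))
      (Nat.cast_ne_zero.mpr (Nat.factorial_ne_zero _))]

theorem mul_sq_mul_abelianP (N : ℕ) (p : ℝ) {b : ℕ} (hb : b ≠ 0) :
    p * ((b : ℝ) ^ 2 * abelianP N p b)
      = (1 - N * p) / (1 - ((N : ℝ) - 1) * p) *
          ((N - 1).choose (b - 1) * (b * p) ^ b * (1 - b * p) ^ ((N : ℤ) - b - 1)) := by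
  have hbpow : (b : ℝ) ^ 2 * (b : ℝ) ^ ((b : ℤ) - 2) = (b : ℝ) ^ b := by
    rw [← zpow_ofNat, ← zpow_add₀ (Nat.cast_ne_zero.mpr hb), add_sub_cancel, zpow_natCast]
  have hppow : p * p ^ (b - 1) = p ^ b := by
    rw [← pow_succ', Nat.sub_add_cancel (Nat.one_le_iff_ne_zero.mpr hb)]
  rw [abelianP, mul_pow, ← hbpow, ← hppow]
  ring

theorem mul_sum_sq_mul_abelianP (n : ℕ) {p : ℝ} (hW : 1 - ((n + 1 : ℕ) : ℝ) * p ≠ 0) :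
    p * ∑ b ∈ Icc 1 (n + 1), (b : ℝ) ^ 2 * abelianP (n + 1) p b
      = (1 - ((n + 1 : ℕ) : ℝ) * p) / (1 - (((n + 1 : ℕ) : ℝ) - 1) * p) *
          (1 / (1 - ((n + 1 : ℕ) : ℝ) * p)
            - ∑ m ∈ range (n + 1), (n.descFactorial m : ℝ) * p ^ m) := by
  have hreflect : ∀ k ∈ range (n + 1),
      ((n + 1 - 1).choose (n + 1 - k - 1) : ℝ) * ((n + 1 - k : ℕ) * p) ^ (n + 1 - k)
          * (1 - (n + 1 - k : ℕ) * p) ^ (((n + 1 : ℕ) : ℤ) - (n + 1 - k : ℕ) - 1)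
        = n.choose k * (1 - ((1 - ((n + 1 : ℕ) : ℝ) * p) + k * p)) ^ (n + 1 - k)
          * ((1 - ((n + 1 : ℕ) : ℝ) * p) + k * p) ^ ((k : ℤ) - 1) := by
    intro k hk
    have hkn : k ≤ n := Nat.lt_succ_iff.mp (mem_range.mp hk)
    rw [Nat.add_sub_cancel, show n + 1 - k - 1 = n - k by omega, Nat.choose_symm hkn,
      show ((n + 1 : ℕ) : ℤ) - (n + 1 - k : ℕ) - 1 = (k : ℤ) - 1 by omega]
    push_cast [Nat.cast_sub (by omega : k ≤ n + 1)]
    rw [show (1 : ℝ) - (n + 1 - k) * p = 1 - (n + 1) * p + k * p by ring]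
    ring
  rw [mul_sum, sum_congr rfl fun b hb => mul_sq_mul_abelianP (n + 1) p
      (Nat.one_le_iff_ne_zero.mp (mem_Icc.mp hb).1), ← mul_sum,
    sum_Icc_one_succ_eq_sum_range_reflect, sum_congr rfl hreflect,
    sum_choose_mul_sub_pow_succ_mul_zpow n 1 hW p]
  simp

theorem abelian_second_moment (N : ℕ) (hN : 0 < N) (p : ℝ)
    (hp : 0 < p) (hp' : p < 1 / N) :
    ∑ b ∈ Finset.Icc 1 N, (b : ℝ) ^ 2 * abelianP N p b
      = (((1 - N * p) / (1 - ((N : ℝ) - 1) * p)) / p) *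
          (1 / (1 - N * p) - 1
            - ∑ i ∈ Finset.Icc 1 (N - 1),
                (((N - 1).factorial : ℝ) / (N - 1 - i).factorial) * p ^ i) := by
  obtain ⟨n, rfl⟩ := Nat.exists_eq_add_one_of_ne_zero hN.ne'
  have hW : 1 - ((n + 1 : ℕ) : ℝ) * p ≠ 0 := by
    rw [lt_div_iff₀ (by positivity)] at hp'
    linarith
  rw [← mul_div_cancel_left₀ (∑ b ∈ Icc 1 (n + 1), (b : ℝ) ^ 2 * abelianP (n + 1) p b) hp.ne',
    mul_sum_sq_mul_abelianP n hW, sum_range_descFactorial_mul_pow, Nat.add_sub_cancel]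
  ring
end
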